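/- (A priori estimate for solutions of the Volterra integral equation) Let 0 < α ≤ 1, ψ increasing C¹ on I = [a,b], 0 ≤ N < 1 a constant, r continuous nonnegative on {(t,σ) : a ≤ σ ≤ t ≤ b} with t ↦ r(t,t) nondecreasing and r(t,σ) ≤ r(t,t). Suppose f, k are continuous with |f(t,u,v)−f(t,ū,v̄)| ≤ N(|u−ū|+|v−v̄|) and |k(t,σ,u)−k(t,σ,v)| ≤ r(t,σ)|u−v|, and C₁ = sup_{t∈I} |f(t, 0, (1/Γ(α))∫_a^t ψ'(σ)(ψ(t)−ψ(σ))^{α−1} k(t,σ,0)dσ)| < ∞. If x : I → ℝ is a continuous solution of x(t) = f(t, x(t), (1/Γ(α))∫_a^t ψ'(σ)(ψ(t)−ψ(σ))^{α−1} k(t,σ,x(σ))dσ), then |x(t)| ≤ (C₁/(1−N)) · E_α( (N/(1−N)) r(t,t) (ψ(t)−ψ(a))^α ) for all t ∈ I. -/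

import Mathlib

/-!
Fix `t`. For `a ≤ σ ≤ s ≤ t` we have `r(s, σ) ≤ r(s, s) ≤ r(t, t)`, so the Lipschitz bounds on `f`
and `k` turn the equation into the linear inequality `|x| ≤ C₁ / (1 - N) + c · I^{α;ψ}_{a+} |x|`
on `[a, t]`, with `c = N / (1 - N) · r(t, t)`. Iterating it `n` times, starting from a bound `M`
of `|x|`, yields the `n`-th partial sum of the Mittag-Leffler series plus the remainder
`M cⁿ (ψ - ψ(a))^{αn} / Γ(αn + 1)`: the substitution `τ = ψ(σ)` reduces `I^{α;ψ}_{a+}` of a power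
of `ψ - ψ(a)` to a Beta integral, and the remainder tends to `0` because `Γ(αn + 1)` grows faster
than any exponential.
-/

open MeasureTheory Set

/-- One-parameter Mittag-Leffler function `E_α(z) = ∑ z^k / Γ(αk+1)`. -/
noncomputable def ML (α z : ℝ) : ℝ := ∑' k : ℕ, z ^ k / Real.Gamma (α * k + 1)

/-- The inner Volterra integral operator (scalar version). -/
noncomputable def volterraK (α : ℝ) (ψ : ℝ → ℝ) (a : ℝ)
    (k : ℝ → ℝ → ℝ → ℝ) (x : ℝ → ℝ) (t : ℝ) : ℝ :=
  (Real.Gamma α)⁻¹ * ∫ σ in a..t, deriv ψ σ * (ψ t - ψ σ) ^ (α - 1) * k t σ (x σ)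

lemma Real.exp_neg_mul_rpow_le_Gamma {x T : ℝ} (hx : 1 ≤ x) (hT : 1 ≤ T) :
    Real.exp (-(T + 1)) * T ^ (x - 1) ≤ Real.Gamma x := by
  have hT0 : 0 < T := one_pos.trans_le hT
  have hint := Real.GammaIntegral_convergent (one_pos.trans_le hx)
  have hsub : Ioc T (T + 1) ⊆ Ioi 0 := fun t ht => hT0.trans ht.1
  have hbound : ∀ t ∈ Ioc T (T + 1),
      Real.exp (-(T + 1)) * T ^ (x - 1) ≤ Real.exp (-t) * t ^ (x - 1) := fun t ht =>
    mul_le_mul (Real.exp_le_exp.2 (by linarith [ht.2]))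
      (Real.rpow_le_rpow hT0.le ht.1.le (by linarith)) (by positivity) (by positivity)
  calc Real.exp (-(T + 1)) * T ^ (x - 1)
      = Real.exp (-(T + 1)) * T ^ (x - 1) * volume.real (Ioc T (T + 1)) := by
        simp [measureReal_def, Real.volume_Ioc]
    _ ≤ ∫ t in Ioc T (T + 1), Real.exp (-t) * t ^ (x - 1) :=
        setIntegral_ge_of_const_le_real measurableSet_Ioc (by simp) hbound (hint.mono_set hsub)
    _ ≤ ∫ t in Ioi 0, Real.exp (-t) * t ^ (x - 1) :=
        setIntegral_mono_set hint (ae_restrict_of_forall_mem measurableSet_Ioi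
          fun t ht => mul_nonneg (Real.exp_pos _).le (Real.rpow_nonneg (le_of_lt ht) _))
          hsub.eventuallyLE
    _ = Real.Gamma x := (Real.Gamma_eq_integral (one_pos.trans_le hx)).symm

lemma summable_mittagLeffler {α : ℝ} (hα : 0 < α) (z : ℝ) :
    Summable fun k : ℕ => z ^ k / Real.Gamma (α * k + 1) := by
  set T : ℝ := (2 * |z| + 2) ^ α⁻¹
  have hT : 1 ≤ T := Real.one_le_rpow (by linarith [abs_nonneg z]) (by positivity)
  have hTα : T ^ α = 2 * |z| + 2 := by
    rw [← Real.rpow_mul (by positivity), inv_mul_cancel₀ hα.ne', Real.rpow_one]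
  refine Summable.of_norm_bounded
    ((summable_geometric_two).mul_left (Real.exp (T + 1))) fun k => ?_
  have hΓ : Real.exp (-(T + 1)) * (2 * |z| + 2) ^ k ≤ Real.Gamma (α * k + 1) := by
    simpa [Real.rpow_mul (zero_le_one.trans hT), hTα] using
      Real.exp_neg_mul_rpow_le_Gamma (x := α * k + 1) (le_add_of_nonneg_left (by positivity)) hT
  have hratio : |z| / (2 * |z| + 2) ≤ 1 / 2 := by
    rw [div_le_div_iff₀ (by positivity) two_pos]; linarith [abs_nonneg z]
  calc ‖z ^ k / Real.Gamma (α * k + 1)‖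
      = |z| ^ k / Real.Gamma (α * k + 1) := by
        rw [Real.norm_eq_abs, abs_div, abs_pow,
          abs_of_pos (Real.Gamma_pos_of_pos (by positivity))]
    _ ≤ |z| ^ k / (Real.exp (-(T + 1)) * (2 * |z| + 2) ^ k) := by gcongr
    _ = Real.exp (T + 1) * (|z| / (2 * |z| + 2)) ^ k := by
        rw [div_pow, Real.exp_neg]; field_simp
    _ ≤ Real.exp (T + 1) * (1 / 2) ^ k := by gcongr

lemma integral_rpow_mul_sub_rpow {α β L : ℝ} (hα : 0 < α) (hβ : -1 < β) (hL : 0 < L) :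
    ∫ y in (0 : ℝ)..L, y ^ β * (L - y) ^ (α - 1)
      = Real.Gamma α * Real.Gamma (β + 1) / Real.Gamma (α + β + 1) * L ^ (α + β) := by
  have hβ1 : 0 < ((β + 1 : ℝ) : ℂ).re := by rw [Complex.ofReal_re]; linarith
  have hα' : 0 < ((α : ℝ) : ℂ).re := by simpa using hα
  have hcast : ((∫ y in (0 : ℝ)..L, y ^ β * (L - y) ^ (α - 1) : ℝ) : ℂ)
      = ∫ y in (0 : ℝ)..L, (y : ℂ) ^ (((β + 1 : ℝ) : ℂ) - 1) * ((L : ℂ) - y) ^ ((α : ℂ) - 1) := by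
    rw [← intervalIntegral.integral_ofReal]
    refine intervalIntegral.integral_congr fun y hy => ?_
    rw [uIcc_of_le hL.le] at hy
    simp only [Complex.ofReal_mul, Complex.ofReal_cpow hy.1,
      Complex.ofReal_cpow (sub_nonneg.2 hy.2), Complex.ofReal_sub]
    push_cast; ring_nf
  apply Complex.ofReal_injective
  rw [hcast, Complex.betaIntegral_scaled _ _ hL, Complex.betaIntegral_eq_Gamma_mul_div _ _ hβ1 hα']
  push_cast
  rw [Complex.ofReal_cpow hL.le, ← Complex.Gamma_ofReal, ← Complex.Gamma_ofReal,
    ← Complex.Gamma_ofReal]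
  push_cast
  ring_nf

lemma integral_sub_rpow_mul_rpow {α β c d : ℝ} (hα : 0 < α) (hβ : -1 < β) (hcd : c < d) :
    ∫ τ in c..d, (d - τ) ^ (α - 1) * (τ - c) ^ β
      = Real.Gamma α * Real.Gamma (β + 1) / Real.Gamma (α + β + 1) * (d - c) ^ (α + β) := by
  rw [← integral_rpow_mul_sub_rpow hα hβ (sub_pos.2 hcd), ← sub_self c,
    ← intervalIntegral.integral_comp_sub_right]
  simp only [sub_sub_sub_cancel_right, mul_comm]

noncomputable def psiKernel (α : ℝ) (ψ : ℝ → ℝ) (s σ : ℝ) : ℝ :=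
  deriv ψ σ * (ψ s - ψ σ) ^ (α - 1)

/-- The `ψ`-Riemann–Liouville fractional integral `I^{α;ψ}_{a+} g (s)`. -/
noncomputable def psiFracIntegral (α : ℝ) (ψ : ℝ → ℝ) (a : ℝ) (g : ℝ → ℝ) (s : ℝ) : ℝ :=
  (Real.Gamma α)⁻¹ * ∫ σ in a..s, psiKernel α ψ s σ * g σ

lemma volterraK_eq_psiFracIntegral (α : ℝ) (ψ : ℝ → ℝ) (a : ℝ) (k : ℝ → ℝ → ℝ → ℝ)
    (x : ℝ → ℝ) (t : ℝ) :
    volterraK α ψ a k x t = psiFracIntegral α ψ a (fun σ => k t σ (x σ)) t :=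
  rfl

section PsiFracIntegral

variable {a b s α : ℝ} {ψ g h : ℝ → ℝ}

lemma deriv_nonneg_of_monotoneOn (hψ : MonotoneOn ψ (Icc a b)) {σ : ℝ} (hσ : σ ∈ Ioo a b) :
    0 ≤ deriv ψ σ := by
  rw [← derivWithin_of_isOpen isOpen_Ioo hσ]
  exact (hψ.mono Ioo_subset_Icc_self).derivWithin_nonneg

lemma psiKernel_nonneg (hψ : MonotoneOn ψ (Icc a b)) (hs : s ∈ Icc a b) {σ : ℝ}
    (hσ : σ ∈ Ioo a s) : 0 ≤ psiKernel α ψ s σ := by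
  have hσ' : σ ∈ Ioo a b := ⟨hσ.1, hσ.2.trans_le hs.2⟩
  exact mul_nonneg (deriv_nonneg_of_monotoneOn hψ hσ') <| Real.rpow_nonneg
    (sub_nonneg.2 <| hψ (Ioo_subset_Icc_self hσ') hs hσ.2.le) _

lemma integral_deriv_mul_comp_and_integrable_iff (hψ : MonotoneOn ψ (Icc a b))
    (hψc : ContinuousOn ψ (Icc a b)) (hψd : DifferentiableOn ℝ ψ (Ioo a b))
    (hs : s ∈ Icc a b) (G : ℝ → ℝ) :
    (∫ σ in a..s, deriv ψ σ * G (ψ σ)) = ∫ τ in ψ a..ψ s, G τ ∧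
      (IntervalIntegrable (fun σ => deriv ψ σ * G (ψ σ)) volume a s ↔
        IntervalIntegrable G volume (ψ a) (ψ s)) := by
  have hc : ContinuousOn ψ (uIcc a s) := hψc.mono <| by
    rw [uIcc_of_le hs.1]; exact Icc_subset_Icc_right hs.2
  have hIoo : Ioo (min a s) (max a s) = Ioo a s := by rw [min_eq_left hs.1, max_eq_right hs.1]
  have hd : ∀ σ ∈ Ioo (min a s) (max a s), HasDerivAt ψ (deriv ψ σ) σ := fun σ hσ => by
    rw [hIoo] at hσ
    exact (hψd.differentiableAt (isOpen_Ioo.mem_nhds ⟨hσ.1, hσ.2.trans_le hs.2⟩)).hasDerivAt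
  have hnn : ∀ σ ∈ Ioo (min a s) (max a s), 0 ≤ deriv ψ σ := fun σ hσ => by
    rw [hIoo] at hσ
    exact deriv_nonneg_of_monotoneOn hψ ⟨hσ.1, hσ.2.trans_le hs.2⟩
  simp only [mul_comm (deriv ψ _)]
  exact ⟨intervalIntegral.integral_comp_mul_deriv_of_deriv_nonneg hc hd hnn,
    intervalIntegral.integrable_comp_mul_deriv_iff_of_deriv_nonneg hc hd hnn⟩

lemma intervalIntegrable_psiKernel_mul (hα : 0 < α) (hψ : MonotoneOn ψ (Icc a b))
    (hψc : ContinuousOn ψ (Icc a b)) (hψd : DifferentiableOn ℝ ψ (Ioo a b))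
    (hs : s ∈ Icc a b) (hg : ContinuousOn g (Icc a b)) :
    IntervalIntegrable (fun σ => psiKernel α ψ s σ * g σ) volume a s := by
  have hpow : IntervalIntegrable (fun τ => (ψ s - τ) ^ (α - 1)) volume (ψ a) (ψ s) := by
    simpa using ((intervalIntegral.intervalIntegrable_rpow' (a := 0) (b := ψ s - ψ a)
      (r := α - 1) (by linarith)).comp_sub_left (ψ s)).symm
  have hker : IntervalIntegrable (psiKernel α ψ s) volume a s :=
    (integral_deriv_mul_comp_and_integrable_iff hψ hψc hψd hs
      fun τ => (ψ s - τ) ^ (α - 1)).2.2 hpow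
  refine hker.mul_continuousOn (hg.mono ?_)
  rw [uIcc_of_le hs.1]
  exact Icc_subset_Icc_right hs.2

lemma psiFracIntegral_add (hα : 0 < α) (hψ : MonotoneOn ψ (Icc a b))
    (hψc : ContinuousOn ψ (Icc a b)) (hψd : DifferentiableOn ℝ ψ (Ioo a b))
    (hs : s ∈ Icc a b) (hg : ContinuousOn g (Icc a b)) (hh : ContinuousOn h (Icc a b)) :
    psiFracIntegral α ψ a (fun σ => g σ + h σ) s
      = psiFracIntegral α ψ a g s + psiFracIntegral α ψ a h s := by
  simp only [psiFracIntegral, ← mul_add,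
    ← intervalIntegral.integral_add (intervalIntegrable_psiKernel_mul hα hψ hψc hψd hs hg)
      (intervalIntegrable_psiKernel_mul hα hψ hψc hψd hs hh)]

lemma psiFracIntegral_sub (hα : 0 < α) (hψ : MonotoneOn ψ (Icc a b))
    (hψc : ContinuousOn ψ (Icc a b)) (hψd : DifferentiableOn ℝ ψ (Ioo a b))
    (hs : s ∈ Icc a b) (hg : ContinuousOn g (Icc a b)) (hh : ContinuousOn h (Icc a b)) :
    psiFracIntegral α ψ a (fun σ => g σ - h σ) s
      = psiFracIntegral α ψ a g s - psiFracIntegral α ψ a h s := by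
  simp only [psiFracIntegral, ← mul_sub,
    ← intervalIntegral.integral_sub (intervalIntegrable_psiKernel_mul hα hψ hψc hψd hs hg)
      (intervalIntegrable_psiKernel_mul hα hψ hψc hψd hs hh)]

lemma psiFracIntegral_const_mul (c : ℝ) :
    psiFracIntegral α ψ a (fun σ => c * g σ) s = c * psiFracIntegral α ψ a g s := by
  simp only [psiFracIntegral, mul_left_comm _ c, intervalIntegral.integral_const_mul]

lemma psiFracIntegral_finsetSum {ι : Type*} (S : Finset ι) {g : ι → ℝ → ℝ} (hα : 0 < α)
    (hψ : MonotoneOn ψ (Icc a b)) (hψc : ContinuousOn ψ (Icc a b))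
    (hψd : DifferentiableOn ℝ ψ (Ioo a b)) (hs : s ∈ Icc a b)
    (hg : ∀ i ∈ S, ContinuousOn (g i) (Icc a b)) :
    psiFracIntegral α ψ a (fun σ => ∑ i ∈ S, g i σ) s = ∑ i ∈ S, psiFracIntegral α ψ a (g i) s := by
  simp only [psiFracIntegral, ← Finset.mul_sum,
    ← intervalIntegral.integral_finsetSum fun i hi =>
      intervalIntegrable_psiKernel_mul hα hψ hψc hψd hs (hg i hi)]

lemma psiFracIntegral_mono (hα : 0 < α) (hψ : MonotoneOn ψ (Icc a b))
    (hψc : ContinuousOn ψ (Icc a b)) (hψd : DifferentiableOn ℝ ψ (Ioo a b))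
    (hs : s ∈ Icc a b) (hg : ContinuousOn g (Icc a b)) (hh : ContinuousOn h (Icc a b))
    (hgh : ∀ σ ∈ Ioo a s, g σ ≤ h σ) :
    psiFracIntegral α ψ a g s ≤ psiFracIntegral α ψ a h s := by
  refine mul_le_mul_of_nonneg_left ?_ (inv_nonneg.2 (Real.Gamma_pos_of_pos hα).le)
  exact intervalIntegral.integral_mono_on_of_le_Ioo hs.1
    (intervalIntegrable_psiKernel_mul hα hψ hψc hψd hs hg)
    (intervalIntegrable_psiKernel_mul hα hψ hψc hψd hs hh)
    fun σ hσ => mul_le_mul_of_nonneg_left (hgh σ hσ) (psiKernel_nonneg hψ hs hσ)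

lemma abs_psiFracIntegral_le (hα : 0 < α) (hψ : MonotoneOn ψ (Icc a b))
    (hψc : ContinuousOn ψ (Icc a b)) (hψd : DifferentiableOn ℝ ψ (Ioo a b))
    (hs : s ∈ Icc a b) (hg : ContinuousOn g (Icc a b)) :
    |psiFracIntegral α ψ a g s| ≤ psiFracIntegral α ψ a (fun σ => |g σ|) s := by
  have hΓ : 0 ≤ (Real.Gamma α)⁻¹ := inv_nonneg.2 (Real.Gamma_pos_of_pos hα).le
  have hint := intervalIntegrable_psiKernel_mul hα hψ hψc hψd hs hg
  rw [psiFracIntegral, abs_mul, abs_of_nonneg hΓ]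
  refine mul_le_mul_of_nonneg_left ?_ hΓ
  refine (intervalIntegral.abs_integral_le_integral_abs hs.1).trans ?_
  refine intervalIntegral.integral_mono_on_of_le_Ioo hs.1 hint.abs
    (intervalIntegrable_psiKernel_mul hα hψ hψc hψd hs hg.abs) fun σ hσ => ?_
  rw [abs_mul, abs_of_nonneg (psiKernel_nonneg hψ hs hσ)]

lemma psiFracIntegral_rpow {β : ℝ} (hα : 0 < α) (hβ : 0 ≤ β) (hψ : MonotoneOn ψ (Icc a b))
    (hψc : ContinuousOn ψ (Icc a b)) (hψd : DifferentiableOn ℝ ψ (Ioo a b))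
    (hs : s ∈ Icc a b) :
    psiFracIntegral α ψ a (fun σ => (ψ σ - ψ a) ^ β) s
      = Real.Gamma (β + 1) / Real.Gamma (α + β + 1) * (ψ s - ψ a) ^ (α + β) := by
  have hsubst := (integral_deriv_mul_comp_and_integrable_iff hψ hψc hψd hs
    fun τ => (ψ s - τ) ^ (α - 1) * (τ - ψ a) ^ β).1
  simp only [← mul_assoc] at hsubst
  rw [psiFracIntegral]
  simp only [psiKernel, hsubst]
  rcases (hψ ⟨le_rfl, hs.1.trans hs.2⟩ hs hs.1).eq_or_lt with heq | hlt
  · rw [heq, intervalIntegral.integral_same, sub_self, Real.zero_rpow (by positivity)]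
    simp
  · rw [integral_sub_rpow_mul_rpow hα (by linarith) hlt]
    field_simp [(Real.Gamma_pos_of_pos hα).ne']

lemma abs_volterraK_sub_le {L : ℝ} {k : ℝ → ℝ → ℝ → ℝ} {x y : ℝ → ℝ} (hα : 0 < α)
    (hψ : MonotoneOn ψ (Icc a b)) (hψc : ContinuousOn ψ (Icc a b))
    (hψd : DifferentiableOn ℝ ψ (Ioo a b)) (hs : s ∈ Icc a b)
    (hk : Continuous fun p : ℝ × ℝ × ℝ => k p.1 p.2.1 p.2.2)
    (hx : ContinuousOn x (Icc a b)) (hy : ContinuousOn y (Icc a b))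
    (hkL : ∀ σ ∈ Ioo a s, ∀ u v, |k s σ u - k s σ v| ≤ L * |u - v|) :
    |volterraK α ψ a k x s - volterraK α ψ a k y s|
      ≤ L * psiFracIntegral α ψ a (fun σ => |x σ - y σ|) s := by
  have hkx : ContinuousOn (fun σ => k s σ (x σ)) (Icc a b) :=
    hk.comp_continuousOn (continuousOn_const.prodMk (continuousOn_id.prodMk hx))
  have hky : ContinuousOn (fun σ => k s σ (y σ)) (Icc a b) :=
    hk.comp_continuousOn (continuousOn_const.prodMk (continuousOn_id.prodMk hy))
  rw [volterraK_eq_psiFracIntegral, volterraK_eq_psiFracIntegral,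
    ← psiFracIntegral_sub hα hψ hψc hψd hs hkx hky, ← psiFracIntegral_const_mul]
  exact (abs_psiFracIntegral_le hα hψ hψc hψd hs (hkx.sub hky)).trans <|
    psiFracIntegral_mono hα hψ hψc hψd hs (hkx.sub hky).abs
      (continuousOn_const.mul (hx.sub hy).abs) fun σ hσ => hkL σ hσ _ _

end PsiFracIntegral

/-- At `σ = s`, the `n`-th term of the series `E_α(c (ψ s - ψ a)^α)`. -/
noncomputable def mlTerm (α c a : ℝ) (ψ : ℝ → ℝ) (n : ℕ) (σ : ℝ) : ℝ :=
  c ^ n / Real.Gamma (α * n + 1) * (ψ σ - ψ a) ^ (α * n)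

section Gronwall

variable {a b s α c : ℝ} {ψ : ℝ → ℝ}

lemma mlTerm_zero (σ : ℝ) : mlTerm α c a ψ 0 σ = 1 := by
  simp [mlTerm]

lemma mlTerm_eq_div (n : ℕ) (h : ψ a ≤ ψ s) :
    mlTerm α c a ψ n s = (c * (ψ s - ψ a) ^ α) ^ n / Real.Gamma (α * n + 1) := by
  rw [mlTerm, mul_pow, ← Real.rpow_natCast ((ψ s - ψ a) ^ α), ← Real.rpow_mul (sub_nonneg.2 h)]
  ring

lemma continuousOn_mlTerm (hα : 0 ≤ α) (hψc : ContinuousOn ψ (Icc a b)) (n : ℕ) :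
    ContinuousOn (mlTerm α c a ψ n) (Icc a b) :=
  continuousOn_const.mul <|
    (hψc.sub continuousOn_const).rpow_const fun _ _ => Or.inr (by positivity)

lemma mul_psiFracIntegral_mlTerm (hα : 0 < α) (hψ : MonotoneOn ψ (Icc a b))
    (hψc : ContinuousOn ψ (Icc a b)) (hψd : DifferentiableOn ℝ ψ (Ioo a b))
    (hs : s ∈ Icc a b) (n : ℕ) :
    c * psiFracIntegral α ψ a (mlTerm α c a ψ n) s = mlTerm α c a ψ (n + 1) s := by
  unfold mlTerm
  rw [psiFracIntegral_const_mul, psiFracIntegral_rpow hα (by positivity) hψ hψc hψd hs,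
    show α + α * n + 1 = α * ↑(n + 1) + 1 by push_cast; ring,
    show α + α * n = α * ↑(n + 1) by push_cast; ring]
  field_simp
  ring

lemma le_sum_mlTerm_of_le_add_psiFracIntegral {u : ℝ → ℝ} {A M : ℝ} (hα : 0 < α)
    (hψ : MonotoneOn ψ (Icc a b)) (hψc : ContinuousOn ψ (Icc a b))
    (hψd : DifferentiableOn ℝ ψ (Ioo a b)) (hc : 0 ≤ c) (hu : ContinuousOn u (Icc a b))
    (hM : ∀ s ∈ Icc a b, u s ≤ M)
    (h : ∀ s ∈ Icc a b, u s ≤ A + c * psiFracIntegral α ψ a u s) (n : ℕ) :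
    ∀ s ∈ Icc a b,
      u s ≤ A * ∑ k ∈ Finset.range n, mlTerm α c a ψ k s + M * mlTerm α c a ψ n s := by
  have hterm := continuousOn_mlTerm (c := c) (a := a) hα.le hψc
  induction n with
  | zero => simpa [mlTerm_zero] using hM
  | succ n ih =>
    intro s hs
    have hsum : ContinuousOn (fun σ => A * ∑ k ∈ Finset.range n, mlTerm α c a ψ k σ) (Icc a b) :=
      continuousOn_const.mul (continuousOn_finsetSum _ fun k _ => hterm k)
    have hlast : ContinuousOn (fun σ => M * mlTerm α c a ψ n σ) (Icc a b) :=
      continuousOn_const.mul (hterm n)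
    calc u s ≤ A + c * psiFracIntegral α ψ a u s := h s hs
      _ ≤ A + c * psiFracIntegral α ψ a
            (fun σ => A * ∑ k ∈ Finset.range n, mlTerm α c a ψ k σ + M * mlTerm α c a ψ n σ) s := by
          gcongr
          exact psiFracIntegral_mono hα hψ hψc hψd hs hu (hsum.add hlast)
            fun σ hσ => ih σ ⟨hσ.1.le, hσ.2.le.trans hs.2⟩
      _ = A + A * (c * ∑ k ∈ Finset.range n, psiFracIntegral α ψ a (mlTerm α c a ψ k) s)
            + M * (c * psiFracIntegral α ψ a (mlTerm α c a ψ n) s) := by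
          rw [psiFracIntegral_add hα hψ hψc hψd hs hsum hlast, psiFracIntegral_const_mul,
            psiFracIntegral_const_mul,
            psiFracIntegral_finsetSum _ hα hψ hψc hψd hs fun k _ => hterm k]
          ring
      _ = A * ∑ k ∈ Finset.range (n + 1), mlTerm α c a ψ k s + M * mlTerm α c a ψ (n + 1) s := by
          simp only [Finset.mul_sum, mul_psiFracIntegral_mlTerm hα hψ hψc hψd hs]
          rw [Finset.sum_range_succ', mlTerm_zero]
          ring

/-- Gronwall's inequality of Mittag-Leffler type for the `ψ`-fractional integral. -/
theorem le_mul_ML_of_le_add_psiFracIntegral {u : ℝ → ℝ} {A : ℝ} (hα : 0 < α) (hab : a ≤ b)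
    (hψ : MonotoneOn ψ (Icc a b)) (hψc : ContinuousOn ψ (Icc a b))
    (hψd : DifferentiableOn ℝ ψ (Ioo a b)) (hc : 0 ≤ c) (hu : ContinuousOn u (Icc a b))
    (h : ∀ s ∈ Icc a b, u s ≤ A + c * psiFracIntegral α ψ a u s) :
    u b ≤ A * ML α (c * (ψ b - ψ a) ^ α) := by
  obtain ⟨M, hM⟩ := isCompact_Icc.bddAbove_image hu
  have hiter := le_sum_mlTerm_of_le_add_psiFracIntegral hα hψ hψc hψd hc hu
    (fun s hs => hM (mem_image_of_mem u hs)) h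
  have hb : b ∈ Icc a b := ⟨hab, le_rfl⟩
  have hterm n := mlTerm_eq_div (α := α) (c := c) n (hψ ⟨le_rfl, hab⟩ hb hab)
  have hsum := summable_mittagLeffler hα (c * (ψ b - ψ a) ^ α)
  have hlim := (hsum.hasSum.tendsto_sum_nat.const_mul A).add
    (hsum.tendsto_atTop_zero.const_mul M)
  rw [mul_zero, add_zero] at hlim
  exact ge_of_tendsto' hlim fun n => by simpa only [hterm] using hiter n b hb

end Gronwall

lemma abs_le_of_eq_of_lipschitz {F : ℝ → ℝ → ℝ} {N C x v v₀ : ℝ} (hN : N < 1)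
    (hF : ∀ u v u' v', |F u v - F u' v'| ≤ N * (|u - u'| + |v - v'|))
    (hx : x = F x v) (hC : |F 0 v₀| ≤ C) :
    |x| ≤ (C + N * |v - v₀|) / (1 - N) := by
  have hx' : |x| ≤ N * (|x| + |v - v₀|) + C :=
    calc |x| = |(F x v - F 0 v₀) + F 0 v₀| := by rw [sub_add_cancel, ← hx]
      _ ≤ |F x v - F 0 v₀| + |F 0 v₀| := abs_add_le _ _
      _ ≤ N * (|x| + |v - v₀|) + C := by simpa using add_le_add (hF x v 0 v₀) hC
  rw [le_div_iff₀ (sub_pos.2 hN)]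
  linarith

theorem volterra_solution_estimate_general
    (a b α N C₁ : ℝ) (ψ : ℝ → ℝ) (f : ℝ → ℝ → ℝ → ℝ) (k : ℝ → ℝ → ℝ → ℝ)
    (r : ℝ → ℝ → ℝ) (x : ℝ → ℝ)
    (hα0 : 0 < α)
    (hmono : StrictMonoOn ψ (Icc a b)) (hC1ψ : ContDiffOn ℝ 1 ψ (Icc a b))
    (hN0 : 0 ≤ N) (hN1 : N < 1)
    (hk : Continuous fun p : ℝ × ℝ × ℝ => k p.1 p.2.1 p.2.2)
    (hr0 : ∀ t σ, a ≤ σ → σ ≤ t → t ≤ b → 0 ≤ r t σ)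
    (hrdiagmono : MonotoneOn (fun t => r t t) (Icc a b))
    (hrdiag : ∀ t σ, a ≤ σ → σ ≤ t → t ≤ b → r t σ ≤ r t t)
    (hfLip : ∀ t u v u' v', |f t u v - f t u' v'| ≤ N * (|u - u'| + |v - v'|))
    (hkLip : ∀ t σ u v, |k t σ u - k t σ v| ≤ r t σ * |u - v|)
    (hC₁ : ∀ t ∈ Icc a b, |f t 0 (volterraK α ψ a k (fun _ => 0) t)| ≤ C₁)
    (hx : ContinuousOn x (Icc a b))
    (hsol : ∀ t ∈ Icc a b, x t = f t (x t) (volterraK α ψ a k x t)) :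
    ∀ t ∈ Icc a b,
      |x t| ≤ C₁ / (1 - N) * ML α (N / (1 - N) * r t t * (ψ t - ψ a) ^ α) := by
  intro t ht
  have hsub : Icc a t ⊆ Icc a b := Icc_subset_Icc_right ht.2
  have hψ : MonotoneOn ψ (Icc a t) := hmono.monotoneOn.mono hsub
  have hψc : ContinuousOn ψ (Icc a t) := hC1ψ.continuousOn.mono hsub
  have hψd : DifferentiableOn ℝ ψ (Ioo a t) :=
    (hC1ψ.differentiableOn one_ne_zero).mono (Ioo_subset_Icc_self.trans hsub)
  have hxt : ContinuousOn x (Icc a t) := hx.mono hsub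
  have hN : 0 < 1 - N := sub_pos.2 hN1
  have hrtt : 0 ≤ r t t := hr0 t t ht.1 le_rfl ht.2
  refine le_mul_ML_of_le_add_psiFracIntegral hα0 ht.1 hψ hψc hψd (by positivity) hxt.abs
    fun s hs => ?_
  have hsb : s ∈ Icc a b := hsub hs
  have hK : |volterraK α ψ a k x s - volterraK α ψ a k (fun _ => 0) s|
      ≤ r t t * psiFracIntegral α ψ a (fun σ => |x σ|) s := by
    simpa using abs_volterraK_sub_le (y := fun _ => 0) hα0 hψ hψc hψd hs hk hxt continuousOn_const
      fun σ hσ u v => (hkLip s σ u v).trans <| mul_le_mul_of_nonneg_right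
        ((hrdiag s σ hσ.1.le hσ.2.le hsb.2).trans (hrdiagmono hsb ht hs.2)) (abs_nonneg _)
  calc |x s| ≤ (C₁ + N * |volterraK α ψ a k x s - volterraK α ψ a k (fun _ => 0) s|) / (1 - N) :=
        abs_le_of_eq_of_lipschitz hN1 (hfLip s) (hsol s hsb) (hC₁ s hsb)
    _ ≤ (C₁ + N * (r t t * psiFracIntegral α ψ a (fun σ => |x σ|) s)) / (1 - N) := by gcongr
    _ = C₁ / (1 - N) + N / (1 - N) * r t t * psiFracIntegral α ψ a (fun σ => |x σ|) s := by
        ring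

theorem volterra_solution_estimate
    (a b α N C₁ : ℝ) (ψ : ℝ → ℝ) (f : ℝ → ℝ → ℝ → ℝ) (k : ℝ → ℝ → ℝ → ℝ)
    (r : ℝ → ℝ → ℝ) (x : ℝ → ℝ)
    (hα0 : 0 < α) (hα1 : α ≤ 1) (hab : a ≤ b)
    (hmono : StrictMonoOn ψ (Icc a b)) (hC1ψ : ContDiffOn ℝ 1 ψ (Icc a b))
    (hN0 : 0 ≤ N) (hN1 : N < 1)
    (hf : Continuous fun p : ℝ × ℝ × ℝ => f p.1 p.2.1 p.2.2)
    (hk : Continuous fun p : ℝ × ℝ × ℝ => k p.1 p.2.1 p.2.2)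
    (hr : ContinuousOn (fun q : ℝ × ℝ => r q.1 q.2)
      {q : ℝ × ℝ | a ≤ q.2 ∧ q.2 ≤ q.1 ∧ q.1 ≤ b})
    (hr0 : ∀ t σ, a ≤ σ → σ ≤ t → t ≤ b → 0 ≤ r t σ)
    (hrdiagmono : MonotoneOn (fun t => r t t) (Icc a b))
    (hrdiag : ∀ t σ, a ≤ σ → σ ≤ t → t ≤ b → r t σ ≤ r t t)
    (hfLip : ∀ t u v u' v', |f t u v - f t u' v'| ≤ N * (|u - u'| + |v - v'|))
    (hkLip : ∀ t σ u v, |k t σ u - k t σ v| ≤ r t σ * |u - v|)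
    (hC₁ : ∀ t ∈ Icc a b, |f t 0 (volterraK α ψ a k (fun _ => 0) t)| ≤ C₁)
    (hx : ContinuousOn x (Icc a b))
    (hsol : ∀ t ∈ Icc a b, x t = f t (x t) (volterraK α ψ a k x t)) :
    ∀ t ∈ Icc a b,
      |x t| ≤ C₁ / (1 - N) * ML α (N / (1 - N) * r t t * (ψ t - ψ a) ^ α) :=
  volterra_solution_estimate_general a b α N C₁ ψ f k r x hα0 hmono hC1ψ hN0 hN1 hk hr0 hrdiagmono
    hrdiag hfLip hkLip hC₁ hx hsol
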